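/- For n = k(k+1) + k with k ≥ 1, among Rogers–Ramanujan partitions of n (parts with consecutive differences ≥ 2), the maximum norm is (2k+2)!/(2^{k+1}(k+1)!), achieved by (2k+1, 2k-1, ..., 5, 3). -/

import Mathlib

/-- A Rogers–Ramanujan partition: distinct parts, any two distinct parts differ by at
least 2 (equivalently, consecutive parts differ by at least 2). -/
def IsRogersRamanujan {n : ℕ} (lam : Nat.Partition n) : Prop :=
  lam.parts.Nodup ∧ ∀ a ∈ lam.parts, ∀ b ∈ lam.parts, a ≠ b → 2 ≤ |(a : ℤ) - (b : ℤ)|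

private lemma list_sum_getD (l : List ℕ) :
    l.sum = ∑ i ∈ Finset.range l.length, l.getD i 0 := by
  induction l with
  | nil => simp
  | cons a t ih =>
    rw [List.sum_cons, ih, List.length_cons, Finset.sum_range_succ']
    simp [List.getD, Nat.add_comm]

private lemma list_prod_getD (l : List ℕ) :
    l.prod = ∏ i ∈ Finset.range l.length, l.getD i 0 := by
  induction l with
  | nil => simp
  | cons a t ih =>
    rw [List.prod_cons, ih, List.length_cons, Finset.prod_range_succ']
    simp [List.getD, mul_comm]

private lemma sum_odd (r : ℕ) : ∑ i ∈ Finset.range r, (2 * i + 1) = r * r := by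
  induction r with
  | zero => simp
  | succ r ih => rw [Finset.sum_range_succ, ih]; ring

private lemma sum_shift (q r : ℕ) :
    ∑ i ∈ Finset.range r, (2 * (q + i) + 3) = 2 * q * r + r * r + 2 * r := by
  induction r with
  | zero => simp
  | succ r ih => rw [Finset.sum_range_succ, ih]; ring

private lemma sum_parts (k : ℕ) : ∑ i ∈ Finset.range k, (2 * i + 3) = k * k + 2 * k := by
  induction k with
  | zero => simp
  | succ k ih => rw [Finset.sum_range_succ, ih]; ring

private lemma fact_id (k : ℕ) :
    (∏ i ∈ Finset.range k, (2 * i + 3)) * (2 ^ (k + 1) * Nat.factorial (k + 1)) =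
      Nat.factorial (2 * k + 2) := by
  induction k with
  | zero => decide
  | succ k ih =>
    have h1 : 2 * (k + 1) + 2 = (2 * k + 2) + 1 + 1 := by ring
    rw [Finset.prod_range_succ, h1, Nat.factorial_succ ((2 * k + 2) + 1),
      Nat.factorial_succ (2 * k + 2), ← ih, pow_succ, Nat.factorial_succ (k + 1)]
    ring

/-- The key upper bound: any Rogers–Ramanujan partition of `k(k+1)+k` has product of
parts at most `3·5⋯(2k+1)`. -/
private lemma rr_upper (k : ℕ) (hk : 1 ≤ k) (lam : Nat.Partition (k * (k + 1) + k))
    (h : IsRogersRamanujan lam) :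
    lam.parts.prod ≤ ∏ i ∈ Finset.range k, (2 * i + 3) := by
  classical
  set l : List ℕ := lam.parts.sort (· ≤ ·) with hldef
  have hl : (l : Multiset ℕ) = lam.parts := Multiset.sort_eq _ _
  set r := l.length with hrdef
  set f : ℕ → ℕ := fun i => l.getD i 0 with hfdef
  have hfi : ∀ i (hi : i < l.length), f i = l[i] := fun i hi =>
    List.getD_eq_getElem l 0 hi
  have hsum : ∑ i ∈ Finset.range r, f i = k * k + 2 * k := by
    have h1 : l.sum = lam.parts.sum := by rw [← hl]; simp
    have h2 := lam.parts_sum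
    have := list_sum_getD l
    rw [h1, h2] at this
    rw [← this]; ring
  have hprod : lam.parts.prod = ∏ i ∈ Finset.range r, f i := by
    have h1 : l.prod = lam.parts.prod := by rw [← hl]; simp
    rw [← h1, list_prod_getD l]
  have hmem : ∀ i, i < r → f i ∈ lam.parts := by
    intro i hi
    rw [hfi i hi, ← hl]
    exact Multiset.mem_coe.mpr (List.getElem_mem _)
  have hpos : ∀ i, i < r → 1 ≤ f i := fun i hi => lam.parts_pos (hmem i hi)
  have hnd : l.Nodup := by
    rw [← Multiset.coe_nodup, hl]; exact h.1
  have hstep : ∀ i j, i < j → j < r → f i + 2 ≤ f j := by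
    intro i j hij hj
    have hi : i < r := hij.trans hj
    have h1 : f i ≤ f j := by
      rw [hfi i hi, hfi j hj]
      exact List.pairwise_iff_getElem.mp (Multiset.pairwise_sort _ _) i j hi hj hij
    have hne : f i ≠ f j := by
      rw [hfi i hi, hfi j hj]
      exact List.pairwise_iff_getElem.mp hnd i j hi hj hij
    have h2 := h.2 (f i) (hmem i hi) (f j) (hmem j hj) hne
    rcases abs_cases ((f i : ℤ) - (f j : ℤ)) with ⟨he, _⟩ | ⟨he, _⟩ <;> omega
  have hgap : ∀ d i, i + d < r → f i + 2 * d ≤ f (i + d) := by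
    intro d
    induction d with
    | zero => intro i _; simp
    | succ d ih =>
      intro i hi
      have h1 := ih i (by omega)
      have h2 := hstep (i + d) (i + d + 1) (by omega) (by omega)
      have : i + (d + 1) = i + d + 1 := by ring
      rw [this]; omega
  have hlb : ∀ i, i < r → 2 * i + 1 ≤ f i := by
    intro i hi
    have h1 : f 0 + 2 * i ≤ f i := by simpa using hgap i 0 (by omega)
    have h2 := hpos 0 (by omega)
    omega
  have hrk : r ≤ k := by
    by_contra hc
    have h1 : (k + 1) * (k + 1) ≤ r * r := Nat.mul_le_mul (by omega) (by omega)
    have h2 : ∑ i ∈ Finset.range r, (2 * i + 1) ≤ ∑ i ∈ Finset.range r, f i :=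
      Finset.sum_le_sum fun i hi => hlb i (Finset.mem_range.mp hi)
    rw [sum_odd, hsum] at h2
    have h3 : (k + 1) * (k + 1) = k * k + 2 * k + 1 := by ring
    omega
  have hr1 : 1 ≤ r := by
    by_contra hc
    have hr0 : r = 0 := by omega
    rw [hr0] at hsum
    simp at hsum
    nlinarith
  set q := k - r with hqdef
  have hqr : k = q + r := by omega
  -- move to the reals
  set F : ℕ → ℝ := fun i => (f i : ℝ) with hFdef
  set C : ℕ → ℝ := fun i => 2 * ((q : ℝ) + i) + 3 with hCdef
  have hCpos : ∀ i, (0 : ℝ) < C i := by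
    intro i; rw [hCdef]; positivity
  have hCmono : ∀ i j, i ≤ j → C i ≤ C j := by
    intro i j hij
    have : (i : ℝ) ≤ j := Nat.cast_le.mpr hij
    simp only [hCdef]; linarith
  have hFnonneg : ∀ i, (0 : ℝ) ≤ F i := fun i => Nat.cast_nonneg _
  have hkey1 : ∀ i ∈ Finset.range r, F i ≤ C i * Real.exp ((F i - C i) / C i) := by
    intro i _
    have hc := hCpos i
    have h1 : (F i - C i) / C i + 1 ≤ Real.exp ((F i - C i) / C i) := Real.add_one_le_exp _
    have h2 : C i * ((F i - C i) / C i + 1) = F i := by field_simp; ring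
    calc F i = C i * ((F i - C i) / C i + 1) := h2.symm
      _ ≤ C i * Real.exp ((F i - C i) / C i) := mul_le_mul_of_nonneg_left h1 hc.le
  have hprodle : ∏ i ∈ Finset.range r, F i ≤
      (∏ i ∈ Finset.range r, C i) *
        Real.exp (∑ i ∈ Finset.range r, (F i - C i) / C i) := by
    calc ∏ i ∈ Finset.range r, F i
        ≤ ∏ i ∈ Finset.range r, C i * Real.exp ((F i - C i) / C i) :=
          Finset.prod_le_prod (fun i _ => hFnonneg i) hkey1
      _ = (∏ i ∈ Finset.range r, C i) *
            Real.exp (∑ i ∈ Finset.range r, (F i - C i) / C i) := by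
          rw [Finset.prod_mul_distrib, Real.exp_sum]
  have hsumF : ∑ i ∈ Finset.range r, F i = ((k * k + 2 * k : ℕ) : ℝ) := by
    rw [← hsum]; push_cast; rfl
  have hsumC : ∑ i ∈ Finset.range r, C i = ((2 * q * r + r * r + 2 * r : ℕ) : ℝ) := by
    rw [← sum_shift q r]
    push_cast
    rfl
  have hsumD : ∑ i ∈ Finset.range r, (F i - C i) = (q : ℝ) * (q + 2) := by
    rw [Finset.sum_sub_distrib, hsumF, hsumC]
    have : (k : ℝ) = (q : ℝ) + r := by exact_mod_cast congrArg (Nat.cast : ℕ → ℝ) hqr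
    push_cast
    rw [this]
    ring
  have hex : ∃ t, t < r ∧ C t ≤ F t := by
    by_contra hc
    push_neg at hc
    have hne : (Finset.range r).Nonempty := ⟨0, Finset.mem_range.mpr (by omega)⟩
    have h0 : ∑ i ∈ Finset.range r, (F i - C i) < ∑ i ∈ Finset.range r, (0 : ℝ) :=
      Finset.sum_lt_sum_of_nonempty hne fun i hi => by
        have := hc i (Finset.mem_range.mp hi); linarith
    rw [hsumD, Finset.sum_const, smul_zero] at h0
    have hq0 : (0 : ℝ) ≤ (q : ℝ) * (q + 2) := by positivity
    linarith
  set t := Nat.find hex with htdef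
  have htspec : t < r ∧ C t ≤ F t := Nat.find_spec hex
  have htmin : ∀ i, i < t → F i < C i := by
    intro i hi
    have h1 := Nat.find_min hex hi
    push_neg at h1
    exact h1 (hi.trans htspec.1)
  have hDmono : ∀ i j, i ≤ j → j < r → F i - C i ≤ F j - C j := by
    intro i j hij hj
    have h1 : f i + 2 * (j - i) ≤ f j := by
      have := hgap (j - i) i (by omega)
      have hji : i + (j - i) = j := by omega
      rwa [hji] at this
    have h2 : (f i : ℝ) + 2 * ((j : ℝ) - i) ≤ (f j : ℝ) := by
      have := (Nat.cast_le (α := ℝ)).mpr h1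
      push_cast [Nat.cast_sub hij] at this
      linarith
    have h3 : C j - C i = 2 * ((j : ℝ) - i) := by simp only [hCdef]; ring
    simp only [hFdef]
    linarith
  have hterm : ∀ i ∈ Finset.range r, (F i - C i) / C i ≤ (F i - C i) / C t := by
    intro i hi
    rw [Finset.mem_range] at hi
    rcases le_or_gt t i with hti | hit
    · have hD : 0 ≤ F i - C i := le_trans (by linarith [htspec.2]) (hDmono t i hti hi)
      have hc1 := hCpos i
      have hc2 := hCpos t
      have hc3 := hCmono t i hti
      rw [div_le_div_iff₀ hc1 hc2]
      nlinarith
    · have hDneg : F i - C i < 0 := by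
        have := htmin i hit; linarith
      have hc1 := hCpos i
      have hc2 := hCpos t
      have hc3 := hCmono i t hit.le
      rw [div_le_div_iff₀ hc1 hc2]
      nlinarith
  have hsumdiv : ∑ i ∈ Finset.range r, (F i - C i) / C i ≤ (q : ℝ) := by
    have hc0 := hCpos 0
    have hct := hCpos t
    have hc0t := hCmono 0 t (Nat.zero_le t)
    have hC0 : C 0 = 2 * (q : ℝ) + 3 := by simp [hCdef]
    have hnum : (0 : ℝ) ≤ (q : ℝ) * (q + 2) := by positivity
    calc ∑ i ∈ Finset.range r, (F i - C i) / C i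
        ≤ ∑ i ∈ Finset.range r, (F i - C i) / C t := Finset.sum_le_sum hterm
      _ = (∑ i ∈ Finset.range r, (F i - C i)) / C t := by rw [← Finset.sum_div]
      _ = (q : ℝ) * (q + 2) / C t := by rw [hsumD]
      _ ≤ (q : ℝ) * (q + 2) / C 0 := by
          rw [div_le_div_iff₀ hct hc0]; nlinarith
      _ ≤ (q : ℝ) := by
          rw [hC0, div_le_iff₀ (by positivity)]
          nlinarith
  have hexp : Real.exp (∑ i ∈ Finset.range r, (F i - C i) / C i) ≤ (3 : ℝ) ^ q := by
    have h1 : Real.exp (∑ i ∈ Finset.range r, (F i - C i) / C i) ≤ Real.exp q :=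
      Real.exp_le_exp.mpr hsumdiv
    have h2 : Real.exp (q : ℝ) = Real.exp 1 ^ q := by
      rw [← Real.exp_nat_mul]; norm_num
    have h3 : Real.exp 1 ≤ 3 := Real.exp_one_lt_d9.le.trans (by norm_num)
    calc Real.exp (∑ i ∈ Finset.range r, (F i - C i) / C i) ≤ Real.exp q := h1
      _ = Real.exp 1 ^ q := h2
      _ ≤ 3 ^ q := pow_le_pow_left₀ (Real.exp_pos 1).le h3 q
  -- assemble
  have hM : ((∏ i ∈ Finset.range k, (2 * i + 3) : ℕ) : ℝ) =
      (∏ i ∈ Finset.range q, (2 * (i : ℝ) + 3)) * ∏ i ∈ Finset.range r, C i := by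
    push_cast
    rw [hqr, Finset.prod_range_add]
    congr 1
    · apply Finset.prod_congr rfl
      intro i _
      simp only [hCdef]
      push_cast
      ring
  have h3q : (3 : ℝ) ^ q ≤ ∏ i ∈ Finset.range q, (2 * (i : ℝ) + 3) := by
    have hc : (3 : ℝ) ^ q = ∏ _i ∈ Finset.range q, (3 : ℝ) := by
      rw [Finset.prod_const, Finset.card_range]
    rw [hc]
    apply Finset.prod_le_prod
    · intro i _; norm_num
    · intro i _
      have : (0 : ℝ) ≤ i := Nat.cast_nonneg i
      linarith
  have hCnonneg : (0 : ℝ) ≤ ∏ i ∈ Finset.range r, C i :=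
    Finset.prod_nonneg fun i _ => (hCpos i).le
  have hfinal : ((lam.parts.prod : ℕ) : ℝ) ≤
      ((∏ i ∈ Finset.range k, (2 * i + 3) : ℕ) : ℝ) := by
    have hcast : ((lam.parts.prod : ℕ) : ℝ) = ∏ i ∈ Finset.range r, F i := by
      rw [hprod]; push_cast; rfl
    rw [hcast, hM]
    calc ∏ i ∈ Finset.range r, F i
        ≤ (∏ i ∈ Finset.range r, C i) *
            Real.exp (∑ i ∈ Finset.range r, (F i - C i) / C i) := hprodle
      _ ≤ (∏ i ∈ Finset.range r, C i) * (3 : ℝ) ^ q :=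
          mul_le_mul_of_nonneg_left hexp hCnonneg
      _ ≤ (∏ i ∈ Finset.range r, C i) * ∏ i ∈ Finset.range q, (2 * (i : ℝ) + 3) :=
          mul_le_mul_of_nonneg_left h3q hCnonneg
      _ = (∏ i ∈ Finset.range q, (2 * (i : ℝ) + 3)) * ∏ i ∈ Finset.range r, C i := by
          ring
  exact_mod_cast hfinal

/-- For `n = k(k+1) + k`, `k ≥ 1`, among Rogers–Ramanujan partitions of `n` the maximum
norm is `(2k+2)! / (2^{k+1} (k+1)!)`, achieved by `(2k+1, 2k-1, …, 5, 3)`. -/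
theorem max_norm_RR_partition_case_j_eq_k (k n : ℕ) (hk : 1 ≤ k)
    (hn : n = k * (k + 1) + k) :
    ∃ M : ℕ, M * (2 ^ (k + 1) * Nat.factorial (k + 1)) = Nat.factorial (2 * k + 2) ∧
      IsGreatest {m | ∃ lam : Nat.Partition n, IsRogersRamanujan lam ∧ lam.parts.prod = m}
        M ∧
      ∃ lam : Nat.Partition n,
        lam.parts = (Multiset.range k).map (fun i => 2 * i + 3) ∧
        lam.parts.prod = M := by
  subst hn
  refine ⟨∏ i ∈ Finset.range k, (2 * i + 3), fact_id k, ?_, ?_⟩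
  · constructor
    · -- membership
      refine ⟨⟨(Multiset.range k).map (fun i => 2 * i + 3), ?_, ?_⟩, ?_, ?_⟩
      · intro i hi
        obtain ⟨j, _, rfl⟩ := Multiset.mem_map.mp hi
        omega
      · show ((Multiset.range k).map fun i => 2 * i + 3).sum = k * (k + 1) + k
        rw [← Finset.range_val, ← Finset.sum_eq_multiset_sum, sum_parts]
        ring
      · constructor
        · exact Multiset.Nodup.map (fun a b hab => by omega) (Multiset.nodup_range k)
        · intro a ha b hb hab
          have ha' : a ∈ Multiset.map (fun i => 2 * i + 3) (Multiset.range k) := ha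
          have hb' : b ∈ Multiset.map (fun i => 2 * i + 3) (Multiset.range k) := hb
          obtain ⟨i, _, rfl⟩ := Multiset.mem_map.mp ha'
          obtain ⟨j, _, rfl⟩ := Multiset.mem_map.mp hb'
          have hij : i ≠ j := fun hc => hab (by rw [hc])
          rcases abs_cases (((2 * i + 3 : ℕ) : ℤ) - ((2 * j + 3 : ℕ) : ℤ)) with ⟨he, _⟩ | ⟨he, _⟩ <;>
            omega
      · show ((Multiset.range k).map fun i => 2 * i + 3).prod = _
        rw [← Finset.range_val, ← Finset.prod_eq_multiset_prod]
    · rintro m ⟨lam, hRR, rfl⟩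
      exact rr_upper k hk lam hRR
  · refine ⟨⟨(Multiset.range k).map (fun i => 2 * i + 3), ?_, ?_⟩, rfl, ?_⟩
    · intro i hi
      obtain ⟨j, _, rfl⟩ := Multiset.mem_map.mp hi
      omega
    · show ((Multiset.range k).map fun i => 2 * i + 3).sum = k * (k + 1) + k
      rw [← Finset.range_val, ← Finset.sum_eq_multiset_sum, sum_parts]
      ring
    · show ((Multiset.range k).map fun i => 2 * i + 3).prod = _
      rw [← Finset.range_val, ← Finset.prod_eq_multiset_prod]
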